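/- Let A(k), k ≥ 1, be a sequence of n×n row-stochastic matrices and let P(k) = A(k)·A(k−1)···A(1) denote the partial backward products. If the matrix seminorm ‖P(k)‖ (induced by the vector seminorm measuring sup-norm distance to the all-ones line) tends to 0 as k → ∞, then the sequence P(k) converges entrywise, and the limit is a row-stochastic matrix of rank 1. -/
import Mathlib


open Matrix Filter

/-- Row-stochastic matrix: nonnegative entries and row sums equal to 1. -/
def Stochastic {n : ℕ} (A : Matrix (Fin n) (Fin n) ℝ) : Prop :=
  (∀ i j, 0 ≤ A i j) ∧ ∀ i, ∑ j, A i j = 1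

/-- There is a walk of length `k` from `i` to `j` in the digraph with edge relation `E`. -/
def HasWalk {n : ℕ} (E : Fin n → Fin n → Prop) (i j : Fin n) (k : ℕ) : Prop :=
  ∃ f : ℕ → Fin n, f 0 = i ∧ f k = j ∧ ∀ m < k, E (f m) (f (m + 1))

/-- The gcd of the lengths of closed walks at `i` (which all stay inside the strongly
connected component of `i`) is 1.  Equivalently, the component of `i` is aperiodic. -/
def AperiodicAt {n : ℕ} (E : Fin n → Fin n → Prop) (i : Fin n) : Prop :=
  ∀ d : ℕ, (∀ k, 0 < k → HasWalk E i i k → d ∣ k) → d = 1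

/-- `backProd A l m = A (l+m) ⬝ A (l+m-1) ⬝ ⋯ ⬝ A (l+1)`, so that
`backProd A l (k-l)` is the partial product `P(k,l)` and `backProd A 0 k = P(k)`. -/
def backProd {n : ℕ} (A : ℕ → Matrix (Fin n) (Fin n) ℝ) (l : ℕ) : ℕ → Matrix (Fin n) (Fin n) ℝ
  | 0 => 1
  | m + 1 => A (l + m + 1) * backProd A l m

/-- Vector seminorm: sup-norm distance to the line spanned by the all-ones vector. -/
noncomputable def sn {n : ℕ} (x : Fin n → ℝ) : ℝ :=
  ⨅ c : ℝ, ‖x - Function.const (Fin n) c‖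

/-- Induced matrix seminorm `‖A‖ = sup { ‖Ax‖/‖x‖ : ‖x‖ ≠ 0 }`. -/
noncomputable def msn {n : ℕ} (A : Matrix (Fin n) (Fin n) ℝ) : ℝ :=
  sSup {r : ℝ | ∃ x : Fin n → ℝ, sn x ≠ 0 ∧ r = sn (A.mulVec x) / sn x}

/-- `mu P j` = minimum of the positive entries of column `j` of `P`. -/
noncomputable def mu {n : ℕ} (P : Matrix (Fin n) (Fin n) ℝ) (j : Fin n) : ℝ :=
  sInf {v : ℝ | ∃ i, 0 < P i j ∧ P i j = v}

/-- Completely reducible: whenever `A i j > 0` there is a directed walk from `j`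
back to `i` in `G(A)`; i.e. no edges between distinct strongly connected components. -/
def CompRed {n : ℕ} (A : Matrix (Fin n) (Fin n) ℝ) : Prop :=
  ∀ i j, 0 < A i j → ∃ k, HasWalk (fun a b => 0 < A a b) j i k

lemma sn_nonneg {n : ℕ} (x : Fin n → ℝ) : 0 ≤ sn x :=
  Real.iInf_nonneg fun c => norm_nonneg _

lemma sn_le {n : ℕ} (x : Fin n → ℝ) (c : ℝ) : sn x ≤ ‖x - Function.const (Fin n) c‖ :=
  ciInf_le ⟨0, by rintro r ⟨c, rfl⟩; exact norm_nonneg _⟩ c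

lemma abs_sub_le_two_sn {n : ℕ} (x : Fin n → ℝ) (i i' : Fin n) :
    |x i - x i'| ≤ 2 * sn x := by
  have h : |x i - x i'| / 2 ≤ sn x := by
    apply le_ciInf
    intro c
    have h1 : |x i - c| ≤ ‖x - Function.const (Fin n) c‖ := by
      have := norm_le_pi_norm (x - Function.const (Fin n) c) i
      simpa [Real.norm_eq_abs] using this
    have h2 : |x i' - c| ≤ ‖x - Function.const (Fin n) c‖ := by
      have := norm_le_pi_norm (x - Function.const (Fin n) c) i'
      simpa [Real.norm_eq_abs] using this
    have h3 : |x i - x i'| ≤ |x i - c| + |c - x i'| := abs_sub_le _ _ _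
    have h4 : |c - x i'| = |x i' - c| := abs_sub_comm _ _
    linarith
  linarith

lemma stoch_mulVec_norm {n : ℕ} {A : Matrix (Fin n) (Fin n) ℝ} (hA : Stochastic A)
    (y : Fin n → ℝ) : ‖A.mulVec y‖ ≤ ‖y‖ := by
  rw [pi_norm_le_iff_of_nonneg (norm_nonneg y)]
  intro i
  simp only [Matrix.mulVec, dotProduct, Real.norm_eq_abs]
  calc |∑ l, A i l * y l| ≤ ∑ l, |A i l * y l| := Finset.abs_sum_le_sum_abs _ _
    _ ≤ ∑ l, A i l * ‖y‖ := by
        apply Finset.sum_le_sum; intro l _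
        rw [abs_mul, abs_of_nonneg (hA.1 i l)]
        exact mul_le_mul_of_nonneg_left
          (by simpa [Real.norm_eq_abs] using norm_le_pi_norm y l) (hA.1 i l)
    _ = ‖y‖ := by rw [← Finset.sum_mul, hA.2 i, one_mul]

lemma stoch_mulVec_sub_const {n : ℕ} {A : Matrix (Fin n) (Fin n) ℝ} (hA : Stochastic A)
    (x : Fin n → ℝ) (c : ℝ) :
    A.mulVec x - Function.const (Fin n) c = A.mulVec (x - Function.const (Fin n) c) := by
  funext i
  simp only [Pi.sub_apply, Matrix.mulVec, dotProduct, Function.const_apply, mul_sub,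
    Finset.sum_sub_distrib, ← Finset.sum_mul, hA.2 i, one_mul]

lemma sn_mulVec_le {n : ℕ} {A : Matrix (Fin n) (Fin n) ℝ} (hA : Stochastic A)
    (x : Fin n → ℝ) : sn (A.mulVec x) ≤ sn x := by
  apply le_ciInf
  intro c
  calc sn (A.mulVec x) ≤ ‖A.mulVec x - Function.const (Fin n) c‖ := sn_le _ c
    _ = ‖A.mulVec (x - Function.const (Fin n) c)‖ := by rw [stoch_mulVec_sub_const hA]
    _ ≤ ‖x - Function.const (Fin n) c‖ := stoch_mulVec_norm hA _

lemma msn_nonneg {n : ℕ} (A : Matrix (Fin n) (Fin n) ℝ) : 0 ≤ msn A :=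
  Real.sSup_nonneg (by rintro r ⟨x, hx, rfl⟩; exact div_nonneg (sn_nonneg _) (sn_nonneg _))

lemma msn_bddAbove {n : ℕ} {A : Matrix (Fin n) (Fin n) ℝ} (hA : Stochastic A) :
    BddAbove {r : ℝ | ∃ x : Fin n → ℝ, sn x ≠ 0 ∧ r = sn (A.mulVec x) / sn x} := by
  refine ⟨1, ?_⟩
  rintro r ⟨x, hx, rfl⟩
  have hpos : 0 < sn x := lt_of_le_of_ne (sn_nonneg x) (Ne.symm hx)
  rw [div_le_one hpos]
  exact sn_mulVec_le hA x

lemma osc_le_msn {n : ℕ} {P : Matrix (Fin n) (Fin n) ℝ} (hP : Stochastic P) (i i' j : Fin n) :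
    |P i j - P i' j| ≤ msn P := by
  by_cases hii : i = i'
  · subst hii; simpa using msn_nonneg P
  · set x : Fin n → ℝ := fun l => if l = j then 1 else 0 with hx
    have hxi : x j = 1 := by simp [hx]
    have hi₀ : ∃ i₀, i₀ ≠ j := by
      by_cases h : j = i
      · exact ⟨i', fun hc => hii ((hc.trans h).symm)⟩
      · exact ⟨i, fun hc => h hc.symm⟩
    obtain ⟨i₀, hi₀j⟩ := hi₀
    have hx0 : x i₀ = 0 := by simp [hx, hi₀j]
    have hsnl : (1:ℝ)/2 ≤ sn x := by
      have := abs_sub_le_two_sn x j i₀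
      rw [hxi, hx0] at this
      norm_num at this
      linarith
    have hsnu : sn x ≤ 1/2 := by
      refine (sn_le x (1/2)).trans ?_
      rw [pi_norm_le_iff_of_nonneg (by norm_num : (0:ℝ) ≤ 1/2)]
      intro l
      simp only [Pi.sub_apply, Function.const_apply, Real.norm_eq_abs, hx]
      split <;> rw [abs_le] <;> constructor <;> norm_num
    have hsnx : sn x ≠ 0 := by linarith
    have hmem : sn (P.mulVec x) / sn x ≤ msn P :=
      le_csSup (msn_bddAbove hP) ⟨x, hsnx, rfl⟩
    have hPx : ∀ a, P.mulVec x a = P a j := by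
      intro a
      simp [Matrix.mulVec, dotProduct, hx, mul_ite]
    have hb : |P i j - P i' j| ≤ 2 * sn (P.mulVec x) := by
      have := abs_sub_le_two_sn (P.mulVec x) i i'
      rwa [hPx i, hPx i'] at this
    have hpos : 0 < sn x := lt_of_le_of_ne (sn_nonneg x) (Ne.symm hsnx)
    have h5 : sn (P.mulVec x) ≤ msn P * sn x := by
      rw [div_le_iff₀ hpos] at hmem; exact hmem
    nlinarith [msn_nonneg P]

lemma one_stochastic {n : ℕ} : Stochastic (1 : Matrix (Fin n) (Fin n) ℝ) := by
  constructor
  · intro i j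
    by_cases h : i = j <;> simp [Matrix.one_apply, h]
  · intro i
    simp [Matrix.one_apply]

lemma mul_stochastic {n : ℕ} {M N : Matrix (Fin n) (Fin n) ℝ} (hM : Stochastic M)
    (hN : Stochastic N) : Stochastic (M * N) := by
  constructor
  · intro i j
    rw [Matrix.mul_apply]
    exact Finset.sum_nonneg fun l _ => mul_nonneg (hM.1 i l) (hN.1 l j)
  · intro i
    simp only [Matrix.mul_apply]
    rw [Finset.sum_comm]
    calc ∑ l, ∑ j, M i l * N l j = ∑ l, M i l * ∑ j, N l j := by
          simp [Finset.mul_sum]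
      _ = 1 := by simp [hN.2, hM.2 i]

lemma backProd_stochastic {n : ℕ} (A : ℕ → Matrix (Fin n) (Fin n) ℝ)
    (hA : ∀ k, 1 ≤ k → Stochastic (A k)) (l m : ℕ) : Stochastic (backProd A l m) := by
  induction m with
  | zero => exact one_stochastic
  | succ m ih => exact mul_stochastic (hA _ (by omega)) ih

lemma backProd_split {n : ℕ} (A : ℕ → Matrix (Fin n) (Fin n) ℝ) (k m : ℕ) :
    backProd A 0 (k + m) = backProd A k m * backProd A 0 k := by
  induction m with
  | zero => simp [backProd]
  | succ m ih =>
    have h1 : k + (m + 1) = (k + m) + 1 := by omega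
    rw [h1]
    show A (0 + (k + m) + 1) * backProd A 0 (k + m) = (A (k + m + 1) * backProd A k m) * backProd A 0 k
    rw [ih, Nat.zero_add, Matrix.mul_assoc]

lemma key_bound {n : ℕ} (A : ℕ → Matrix (Fin n) (Fin n) ℝ)
    (hA : ∀ k, 1 ≤ k → Stochastic (A k)) (k k' : ℕ) (hk : k ≤ k') (i j : Fin n) :
    |backProd A 0 k' i j - backProd A 0 k i j| ≤ msn (backProd A 0 k) := by
  obtain ⟨m, rfl⟩ := Nat.exists_eq_add_of_le hk
  have hsplit := backProd_split A k m
  have hQ : Stochastic (backProd A k m) := backProd_stochastic A hA k m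
  have hPk : Stochastic (backProd A 0 k) := backProd_stochastic A hA 0 k
  set Q := backProd A k m
  set P := backProd A 0 k
  have heq : backProd A 0 (k + m) i j - P i j = ∑ l, Q i l * (P l j - P i j) := by
    rw [hsplit, Matrix.mul_apply]
    simp only [mul_sub, Finset.sum_sub_distrib, ← Finset.sum_mul, hQ.2 i, one_mul]
  rw [heq]
  calc |∑ l, Q i l * (P l j - P i j)| ≤ ∑ l, |Q i l * (P l j - P i j)| :=
        Finset.abs_sum_le_sum_abs _ _
    _ ≤ ∑ l, Q i l * msn P := by
        apply Finset.sum_le_sum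
        intro l _
        rw [abs_mul, abs_of_nonneg (hQ.1 i l)]
        exact mul_le_mul_of_nonneg_left (osc_le_msn hPk l i j) (hQ.1 i l)
    _ = msn P := by rw [← Finset.sum_mul, hQ.2 i, one_mul]

theorem stmt6 {n : ℕ} (A : ℕ → Matrix (Fin n) (Fin n) ℝ)
    (hA : ∀ k, 1 ≤ k → Stochastic (A k))
    (h0 : Tendsto (fun k => msn (backProd A 0 k)) atTop (nhds 0)) :
    ∃ L : Matrix (Fin n) (Fin n) ℝ, Stochastic L ∧ (∀ i i' j, L i j = L i' j) ∧
      ∀ i j, Tendsto (fun k => backProd A 0 k i j) atTop (nhds (L i j)) := by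
  have hstoch : ∀ k, Stochastic (backProd A 0 k) := fun k => backProd_stochastic A hA 0 k
  have hcauchy : ∀ i j, ∃ L, Tendsto (fun k => backProd A 0 k i j) atTop (nhds L) := by
    intro i j
    apply cauchySeq_tendsto_of_complete
    apply cauchySeq_of_le_tendsto_0 (fun k => 2 * msn (backProd A 0 k))
    · intro a b N ha hb
      rw [Real.dist_eq]
      have h1 := key_bound A hA N a ha i j
      have h2 := key_bound A hA N b hb i j
      have h3 := abs_sub_le (backProd A 0 a i j) (backProd A 0 N i j) (backProd A 0 b i j)
      have h4 : |backProd A 0 N i j - backProd A 0 b i j|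
          = |backProd A 0 b i j - backProd A 0 N i j| := abs_sub_comm _ _
      linarith
    · simpa using h0.const_mul (2:ℝ)
  choose L hL using hcauchy
  refine ⟨Matrix.of L, ⟨?_, ?_⟩, ?_, hL⟩
  · intro i j
    exact ge_of_tendsto' (hL i j) fun k => (hstoch k).1 i j
  · intro i
    have h1 : Tendsto (fun k => ∑ j, backProd A 0 k i j) atTop (nhds (∑ j, L i j)) :=
      tendsto_finset_sum _ fun j _ => hL i j
    have h2 : (fun k => ∑ j, backProd A 0 k i j) = fun _ => (1:ℝ) :=
      funext fun k => (hstoch k).2 i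
    rw [h2] at h1
    exact tendsto_nhds_unique h1 tendsto_const_nhds
  · intro i i' j
    have h1 : Tendsto (fun k => backProd A 0 k i j - backProd A 0 k i' j) atTop
        (nhds (L i j - L i' j)) := (hL i j).sub (hL i' j)
    have h2 : Tendsto (fun k => backProd A 0 k i j - backProd A 0 k i' j) atTop (nhds 0) :=
      squeeze_zero_norm (fun k => by
        simpa [Real.norm_eq_abs] using osc_le_msn (hstoch k) i i' j) h0
    exact sub_eq_zero.mp (tendsto_nhds_unique h1 h2)
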